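/- arXiv:1601.00393 — 2 statements merged into one kernel-verified Lean document; each statement's English description precedes it below -/
import Mathlib

section
/- Let f : 2^N → ℝ be submodular, let X_min = {X* ⊆ N : f(X*) ≤ f(X) for all X ⊆ N} be the set of minimizers, and suppose X_min ⊆ [A, B] for some A ⊆ B ⊆ N (where [A,B] = {S : A ⊆ S ⊆ B}). Define U = {i ∈ B \ A : f(i|A) < 0} and D = {j ∈ B \ A : f(j|B−j) > 0}. Then X_min ⊆ [A ∪ U, B \ D]. -/
open Finset

theorem reduction_step_minimization
    {α : Type*} [DecidableEq α] (N : Finset α) (f : Finset α → ℝ)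
    (hf : ∀ X ⊆ N, ∀ Y ⊆ N, f X + f Y ≥ f (X ∩ Y) + f (X ∪ Y))
    (A B : Finset α) (hAB : A ⊆ B) (hBN : B ⊆ N)
    (hlat : ∀ X ⊆ N, (∀ Y ⊆ N, f X ≤ f Y) → A ⊆ X ∧ X ⊆ B) :
    ∀ X ⊆ N, (∀ Y ⊆ N, f X ≤ f Y) →
      A ∪ ((B \ A).filter fun i => f (insert i A) - f A < 0) ⊆ X ∧
      X ⊆ B \ ((B \ A).filter fun j => f B - f (B.erase j) > 0) := by
  intro X hXN hmin
  obtain ⟨hAX, hXB⟩ := hlat X hXN hmin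
  constructor
  · intro i hi
    rcases mem_union.1 hi with h | h
    · exact hAX h
    · simp only [mem_filter, mem_sdiff] at h
      obtain ⟨⟨hiB, hiA⟩, hneg⟩ := h
      by_contra hiX
      have h1 := hf X hXN (insert i A) (insert_subset (hBN hiB) (hAX.trans hXN))
      have hinter : X ∩ insert i A = A := by
        apply subset_antisymm
        · intro x hx
          rcases mem_inter.1 hx with ⟨hx1, hx2⟩
          rcases mem_insert.1 hx2 with rfl | hx3
          · exact absurd hx1 hiX
          · exact hx3
        · intro x hx
          exact mem_inter.2 ⟨hAX hx, mem_insert_of_mem hx⟩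
      have hunion : X ∪ insert i A = insert i X := by
        ext x
        simp only [mem_union, mem_insert]
        constructor
        · rintro (h | h)
          · exact Or.inr h
          · rcases h with h | h
            · exact Or.inl h
            · exact Or.inr (hAX h)
        · rintro (rfl | h)
          · exact Or.inr (Or.inl rfl)
          · exact Or.inl h
      rw [hinter, hunion] at h1
      have h2 := hmin (insert i X) (insert_subset (hBN hiB) hXN)
      linarith
  · intro x hx
    rw [mem_sdiff]
    refine ⟨hXB hx, ?_⟩
    simp only [mem_filter, mem_sdiff, not_and]
    intro ⟨hxB, hxA⟩
    by_contra hpos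
    have h1 := hf X hXN (B.erase x) ((erase_subset _ _).trans hBN)
    have hinter : X ∩ B.erase x = X.erase x := by
      ext y
      simp only [mem_inter, mem_erase]
      constructor
      · rintro ⟨h1, h2, h3⟩
        exact ⟨h2, h1⟩
      · rintro ⟨h1, h2⟩
        exact ⟨h2, h1, hXB h2⟩
    have hunion : X ∪ B.erase x = B := by
      apply subset_antisymm
      · exact union_subset hXB (erase_subset _ _)
      · intro y hy
        by_cases hyx : y = x
        · exact mem_union_left _ (hyx ▸ hx)
        · exact mem_union_right _ (mem_erase.2 ⟨hyx, hy⟩)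
    rw [hinter, hunion] at h1
    have h2 := hmin (X.erase x) ((erase_subset _ _).trans hXN)
    linarith
end

section
/- Let f : 2^N → ℝ be submodular, let X_max = {X* ⊆ N : f(X*) ≥ f(X) for all X ⊆ N} be the set of maximizers, and suppose X_max ⊆ [A, B] for some A ⊆ B ⊆ N. Define U = {i ∈ B \ A : f(i|A) < 0} and D = {j ∈ B \ A : f(j|B−j) > 0}. Then X_max ⊆ [A ∪ D, B \ U]. -/
open Finset

theorem reduction_step_maximization
    {α : Type*} [DecidableEq α] (N : Finset α) (f : Finset α → ℝ)
    (hf : ∀ X ⊆ N, ∀ Y ⊆ N, f X + f Y ≥ f (X ∩ Y) + f (X ∪ Y))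
    (A B : Finset α) (hAB : A ⊆ B) (hBN : B ⊆ N)
    (hlat : ∀ X ⊆ N, (∀ Y ⊆ N, f Y ≤ f X) → A ⊆ X ∧ X ⊆ B) :
    ∀ X ⊆ N, (∀ Y ⊆ N, f Y ≤ f X) →
      A ∪ ((B \ A).filter fun j => f B - f (B.erase j) > 0) ⊆ X ∧
      X ⊆ B \ ((B \ A).filter fun i => f (insert i A) - f A < 0) := by
  intro X hXN hopt
  obtain ⟨hAX, hXB⟩ := hlat X hXN hopt
  constructor
  · intro j hj
    rcases Finset.mem_union.mp hj with h | h
    · exact hAX h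
    · simp only [Finset.mem_filter, Finset.mem_sdiff] at h
      obtain ⟨⟨hjB, hjA⟩, hD⟩ := h
      by_contra hjX
      have hsub := hf (insert j X) (Finset.insert_subset (hBN hjB) hXN)
        (B.erase j) ((Finset.erase_subset _ _).trans hBN)
      have h1 : insert j X ∩ B.erase j = X := by
        ext x
        simp only [Finset.mem_inter, Finset.mem_insert, Finset.mem_erase]
        constructor
        · rintro ⟨rfl | hx, hne, _⟩
          · exact absurd rfl hne
          · exact hx
        · intro hx
          exact ⟨Or.inr hx, fun h => hjX (h ▸ hx), hXB hx⟩
      have h2 : insert j X ∪ B.erase j = B := by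
        ext x
        simp only [Finset.mem_union, Finset.mem_insert, Finset.mem_erase]
        constructor
        · rintro ((rfl | hx) | ⟨_, hx⟩)
          · exact hjB
          · exact hXB hx
          · exact hx
        · intro hx
          by_cases h : x = j
          · exact Or.inl (Or.inl h)
          · exact Or.inr ⟨h, hx⟩
      rw [h1, h2] at hsub
      have hle : f (insert j X) ≤ f X :=
        hopt _ (Finset.insert_subset (hBN hjB) hXN)
      linarith
  · intro x hxX
    rw [Finset.mem_sdiff]
    refine ⟨hXB hxX, ?_⟩
    intro hU
    simp only [Finset.mem_filter, Finset.mem_sdiff] at hU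
    obtain ⟨⟨hxB, hxA⟩, hUx⟩ := hU
    have hsub := hf (insert x A) (Finset.insert_subset (hBN hxB) (hAB.trans hBN))
      (X.erase x) ((Finset.erase_subset _ _).trans hXN)
    have h1 : insert x A ∩ X.erase x = A := by
      ext y
      simp only [Finset.mem_inter, Finset.mem_insert, Finset.mem_erase]
      constructor
      · rintro ⟨rfl | hy, hne, _⟩
        · exact absurd rfl hne
        · exact hy
      · intro hy
        exact ⟨Or.inr hy, fun h => hxA (h ▸ hy), hAX hy⟩
    have h2 : insert x A ∪ X.erase x = X := by
      ext y
      simp only [Finset.mem_union, Finset.mem_insert, Finset.mem_erase]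
      constructor
      · rintro ((rfl | hy) | ⟨_, hy⟩)
        · exact hxX
        · exact hAX hy
        · exact hy
      · intro hy
        by_cases h : y = x
        · exact Or.inl (Or.inl h)
        · exact Or.inr ⟨h, hy⟩
    rw [h1, h2] at hsub
    have hle : f (X.erase x) ≤ f X :=
      hopt _ ((Finset.erase_subset _ _).trans hXN)
    linarith
end
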